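/- arXiv:1512.05481 — 4 statements merged into one kernel-verified Lean document; each statement's English description precedes it below -/
import Mathlib

section
/- Let M ∈ ℂ be nonzero and x ∈ ℂ satisfy -1 + 2M² - M⁴ - M²x ≠ 0. Let y be a square root of -1 + 2M² - M⁴ - M²x and set c = [[0, -M/y], [y/M, 0]], S = [[M, 1], [0, M⁻¹]], T = [[M, 0], [2 - M² - M⁻² - x, M⁻¹]]. Then c ∈ SL(2,ℂ), c² = -I, and c·S = T⁻¹·c. -/
/-!
`c = !![0, -b; a, 0]` with `a = y / M`, `b = M / y`, so `a * b = 1` gives `det c = 1` and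
`c² = -1`. Since `T` is lower triangular with diagonal `M, M⁻¹`, `T⁻¹ = !![M⁻¹, 0; -t, M]`
with `t = 2 - M² - M⁻² - x`, and `c * S = T⁻¹ * c` reduces entrywise to `a = t * b`,
i.e. `y² = t M²`, the defining relation of `y`.
-/

section

variable {K : Type*} [Field K]

theorem Matrix.inv_lowerTriangular_fin_two {a : K} (ha : a ≠ 0) (b : K) :
    (!![a, 0; b, a⁻¹])⁻¹ = !![a⁻¹, 0; -b, a] := by
  refine Matrix.inv_eq_right_inv ?_
  rw [Matrix.mul_fin_two, Matrix.one_fin_two]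
  simp [ha, mul_comm b]

variable {a b : K}

theorem Matrix.det_antidiag_fin_two_of_mul_eq_one (hab : a * b = 1) :
    (!![0, -b; a, 0]).det = 1 := by
  simp [Matrix.det_fin_two_of, mul_comm b, hab]

theorem Matrix.antidiag_fin_two_mul_self_of_mul_eq_one (hab : a * b = 1) :
    !![0, -b; a, 0] * !![0, -b; a, 0] = -1 := by
  rw [Matrix.mul_fin_two, Matrix.one_fin_two]
  simp [mul_comm b, hab]

theorem Matrix.antidiag_mul_upperTriangular_fin_two {t : K} (h : a = t * b) (m : K) :
    !![0, -b; a, 0] * !![m, 1; 0, m⁻¹] = !![m⁻¹, 0; -t, m] * !![0, -b; a, 0] := by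
  rw [Matrix.mul_fin_two, Matrix.mul_fin_two, h]
  simp [mul_comm]

end

/-- With `y² = -1 + 2M² - M⁴ - M²x ≠ 0` and `c = [[0, -M/y],[y/M, 0]]`,
`c ∈ SL(2,ℂ)`, `c² = -I`, and `c·S = T⁻¹·c`. -/
theorem c_props (M x y : ℂ) (hM : M ≠ 0)
    (hy : y ^ 2 = -1 + 2 * M ^ 2 - M ^ 4 - M ^ 2 * x)
    (hne : -1 + 2 * M ^ 2 - M ^ 4 - M ^ 2 * x ≠ 0) :
    (!![0, -M / y; y / M, 0] : Matrix (Fin 2) (Fin 2) ℂ).det = 1 ∧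
    (!![0, -M / y; y / M, 0] : Matrix (Fin 2) (Fin 2) ℂ) *
        !![0, -M / y; y / M, 0] = -1 ∧
    (!![0, -M / y; y / M, 0] : Matrix (Fin 2) (Fin 2) ℂ) * !![M, 1; 0, M⁻¹]
      = (!![M, 0; 2 - M ^ 2 - M ^ (-2 : ℤ) - x, M⁻¹] : Matrix (Fin 2) (Fin 2) ℂ)⁻¹ *
          !![0, -M / y; y / M, 0] := by
  have hy0 : y ≠ 0 := by
    rintro rfl
    exact hne (by rw [← hy]; ring)
  have hyM : y / M * (M / y) = 1 := by field_simp
  have key : y / M = (2 - M ^ 2 - M ^ (-2 : ℤ) - x) * (M / y) := by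
    rw [zpow_neg, zpow_ofNat]
    field_simp
    linear_combination hy
  simp only [neg_div]
  exact ⟨Matrix.det_antidiag_fin_two_of_mul_eq_one hyM,
    Matrix.antidiag_fin_two_mul_self_of_mul_eq_one hyM,
    by rw [Matrix.inv_lowerTriangular_fin_two hM,
      Matrix.antidiag_mul_upperTriangular_fin_two key]⟩
end

section
/- With S, T, U, c as defined (S = [[M,1],[0,M⁻¹]], T = [[M,0],[2-M²-M⁻²-x, M⁻¹]], U = T·S⁻¹·T·S·T⁻¹·S, c = [[0, -M/y],[y/M, 0]] where y² = -1+2M²-M⁴-M²x), we have tr(S·U⁻¹·c) = (P₋₂/M²)·(y/M) where P₋₂ = M²x² + (M⁴ - M² + 1)x + M². -/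
theorem fin2_ext (A B : Matrix (Fin 2) (Fin 2) ℂ) (h1 : A 0 0 = B 0 0) (h2 : A 0 1 = B 0 1)
    (h3 : A 1 0 = B 1 0) (h4 : A 1 1 = B 1 1) : A = B := by
  rw [Matrix.eta_fin_two A, Matrix.eta_fin_two B, h1, h2, h3, h4]

set_option maxHeartbeats 1000000 in
/-- `tr(S·U⁻¹·c) = (P₋₂/M²)·(y/M)`. -/
theorem trace_SUinv_c (M x y : ℂ) (hM : M ≠ 0) (hy0 : y ≠ 0)
    (hy : y ^ 2 = -1 + 2 * M ^ 2 - M ^ 4 - M ^ 2 * x) :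
    let S : Matrix (Fin 2) (Fin 2) ℂ := !![M, 1; 0, M⁻¹]
    let T : Matrix (Fin 2) (Fin 2) ℂ := !![M, 0; 2 - M ^ 2 - M ^ (-2 : ℤ) - x, M⁻¹]
    let U := T * S⁻¹ * T * S * T⁻¹ * S
    let c : Matrix (Fin 2) (Fin 2) ℂ := !![0, -M / y; y / M, 0]
    Matrix.trace (S * U⁻¹ * c) =
      ((M ^ 2 * x ^ 2 + (M ^ 4 - M ^ 2 + 1) * x + M ^ 2) / M ^ 2) * (y / M) := by
  intro S T U c
  obtain ⟨N, hN, hNM⟩ : ∃ N, M * N = 1 ∧ M⁻¹ = N := ⟨M⁻¹, by field_simp, rfl⟩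
  obtain ⟨W, hW, hWy⟩ : ∃ W, y * W = 1 ∧ y⁻¹ = W := ⟨y⁻¹, by field_simp, rfl⟩
  have hz : M ^ (-2 : ℤ) = N^2 := by
    rw [zpow_neg, ← hNM, inv_pow]; norm_cast
  have hS2 : S = !![M, 1; 0, N] := by
    show (!![M, 1; 0, M⁻¹] : Matrix (Fin 2) (Fin 2) ℂ) = _; rw [hNM]
  have hT2 : T = !![M, 0; 2 - M ^ 2 - N^2 - x, N] := by
    show (!![M, 0; 2 - M ^ 2 - M ^ (-2 : ℤ) - x, M⁻¹] : Matrix (Fin 2) (Fin 2) ℂ) = _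
    rw [hz, hNM]
  have hS : S⁻¹ = !![N, -1; 0, M] := by
    apply Matrix.inv_eq_right_inv
    rw [hS2, Matrix.mul_fin_two, Matrix.one_fin_two]
    apply fin2_ext <;>
      simp only [Matrix.cons_val', Matrix.cons_val_zero, Matrix.cons_val_one, Matrix.head_cons,
        Matrix.head_fin_const, Matrix.empty_val', Matrix.cons_val_fin_one, Matrix.of_apply]
    · linear_combination ((1)) * hN
    · ring
    · ring
    · linear_combination ((1)) * hN
  have hT : T⁻¹ = !![N, 0; -(2 - M ^ 2 - N^2 - x), M] := by
    apply Matrix.inv_eq_right_inv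
    rw [hT2, Matrix.mul_fin_two, Matrix.one_fin_two]
    apply fin2_ext <;>
      simp only [Matrix.cons_val', Matrix.cons_val_zero, Matrix.cons_val_one, Matrix.head_cons,
        Matrix.head_fin_const, Matrix.empty_val', Matrix.cons_val_fin_one, Matrix.of_apply]
    · linear_combination ((1)) * hN
    · ring
    · ring
    · linear_combination ((1)) * hN
  have hD1 : (T * S⁻¹) = !![(1), (-1)*M; (2)*N + (-1)*N*x + (-1)*N^3 + (-1)*M, (-1) + (1)*x + (1)*N^2 + (1)*M^2] := by
    rw [hT2, hS, Matrix.mul_fin_two]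
    apply fin2_ext <;>
      simp only [Matrix.cons_val', Matrix.cons_val_zero, Matrix.cons_val_one, Matrix.head_cons,
        Matrix.head_fin_const, Matrix.empty_val', Matrix.cons_val_fin_one, Matrix.of_apply]
    · linear_combination ((1)) * hN
    · ring
    · linear_combination ((-1)*M) * hN
    · linear_combination ((1)) * hN
  have hD2 : (T * S⁻¹ * T) = !![(1)*N + (-1)*M + (1)*M*x + (1)*M^3, (-1); (-2) + (2)*x + (-1)*x^2 + (2)*N^2 + (-2)*N^2*x + (-1)*N^4 + (2)*M^2 + (-2)*M^2*x + (-1)*M^4, (-1)*N + (1)*N*x + (1)*N^3 + (1)*M] := by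
    rw [hD1, hT2, Matrix.mul_fin_two]
    apply fin2_ext <;>
      simp only [Matrix.cons_val', Matrix.cons_val_zero, Matrix.cons_val_one, Matrix.head_cons,
        Matrix.head_fin_const, Matrix.empty_val', Matrix.cons_val_fin_one, Matrix.of_apply]
    · linear_combination ((1)*N) * hN
    · linear_combination ((-1)) * hN
    · linear_combination ((-1)*x + (-1)*N^2 + (-2)*M*N) * hN
    · linear_combination ((1)*M) * hN
  have hD3 : (T * S⁻¹ * T * S) = !![(1) + (-1)*M^2 + (1)*M^2*x + (1)*M^4, (-1)*M + (1)*M*x + (1)*M^3; (2)*N + (-2)*N*x + (-1)*N^3 + (-2)*M + (2)*M*x + (-1)*M*x^2 + (2)*M^3 + (-2)*M^3*x + (-1)*M^5, (-1) + (2)*x + (-1)*x^2 + (1)*N^2 + (-1)*N^2*x + (2)*M^2 + (-2)*M^2*x + (-1)*M^4] := by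
    rw [hD2, hS2, Matrix.mul_fin_two]
    apply fin2_ext <;>
      simp only [Matrix.cons_val', Matrix.cons_val_zero, Matrix.cons_val_one, Matrix.head_cons,
        Matrix.head_fin_const, Matrix.empty_val', Matrix.cons_val_fin_one, Matrix.of_apply]
    · linear_combination ((1)) * hN
    · ring
    · linear_combination ((2)*N + (-2)*N*x + (-1)*N^3) * hN
    · linear_combination ((1)) * hN
  have hD4 : (T * S⁻¹ * T * S * T⁻¹) = !![(1)*N*x + (2)*M + (-2)*M*x + (1)*M*x^2 + (-2)*M^3 + (2)*M^3*x + (1)*M^5, (-1)*M^2 + (1)*M^2*x + (1)*M^4; (3) + (-6)*x + (3)*x^2 + (-1)*x^3 + (-1)*N^2 + (3)*N^2*x + (-2)*N^2*x^2 + (-1)*N^4*x + (-4)*M^2 + (6)*M^2*x + (-3)*M^2*x^2 + (3)*M^4 + (-3)*M^4*x + (-1)*M^6, (1)*N + (-1)*N*x + (-1)*M + (2)*M*x + (-1)*M*x^2 + (2)*M^3 + (-2)*M^3*x + (-1)*M^5] := by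
    rw [hD3, hT, Matrix.mul_fin_two]
    apply fin2_ext <;>
      simp only [Matrix.cons_val', Matrix.cons_val_zero, Matrix.cons_val_one, Matrix.head_cons,
        Matrix.head_fin_const, Matrix.empty_val', Matrix.cons_val_fin_one, Matrix.of_apply]
    · linear_combination ((-1)*N + (1)*N*x + (1)*M*x + (1)*M^2*N + (1)*M^3) * hN
    · ring
    · linear_combination ((1) + (-1)*x + (-1)*x^2 + (3)*M*N + (-3)*M*N*x + (1)*M^2 + (-2)*M^2*x + (-1)*M^3*N + (-1)*M^4) * hN
    · linear_combination ((1)*N + (-1)*N*x) * hN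
  have hD5 : (T * S⁻¹ * T * S * T⁻¹ * S) = !![(1)*x + (2)*M^2 + (-2)*M^2*x + (1)*M^2*x^2 + (-2)*M^4 + (2)*M^4*x + (1)*M^6, (1)*N*x + (1)*M + (-1)*M*x + (1)*M*x^2 + (-1)*M^3 + (2)*M^3*x + (1)*M^5; (-1)*N + (3)*N*x + (-2)*N*x^2 + (-1)*N^3*x + (3)*M + (-6)*M*x + (3)*M*x^2 + (-1)*M*x^3 + (-4)*M^3 + (6)*M^3*x + (-3)*M^3*x^2 + (3)*M^5 + (-3)*M^5*x + (-1)*M^7, (2) + (-4)*x + (2)*x^2 + (-1)*x^3 + (2)*N^2*x + (-2)*N^2*x^2 + (-1)*N^4*x + (-2)*M^2 + (4)*M^2*x + (-3)*M^2*x^2 + (2)*M^4 + (-3)*M^4*x + (-1)*M^6] := by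
    rw [hD4, hS2, Matrix.mul_fin_two]
    apply fin2_ext <;>
      simp only [Matrix.cons_val', Matrix.cons_val_zero, Matrix.cons_val_one, Matrix.head_cons,
        Matrix.head_fin_const, Matrix.empty_val', Matrix.cons_val_fin_one, Matrix.of_apply]
    · linear_combination ((1)*x) * hN
    · linear_combination ((-1)*M + (1)*M*x + (1)*M^3) * hN
    · linear_combination ((-1)*N + (3)*N*x + (-2)*N*x^2 + (-1)*N^3*x) * hN
    · linear_combination ((-1) + (2)*x + (-1)*x^2 + (2)*M^2 + (-2)*M^2*x + (-1)*M^4) * hN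
  have hUinv : U⁻¹ = !![(2) + (-4)*x + (2)*x^2 + (-1)*x^3 + (2)*N^2*x + (-2)*N^2*x^2 + (-1)*N^4*x + (-2)*M^2 + (4)*M^2*x + (-3)*M^2*x^2 + (2)*M^4 + (-3)*M^4*x + (-1)*M^6, (-1)*N*x + (-1)*M + (1)*M*x + (-1)*M*x^2 + (1)*M^3 + (-2)*M^3*x + (-1)*M^5; (1)*N + (-3)*N*x + (2)*N*x^2 + (1)*N^3*x + (-3)*M + (6)*M*x + (-3)*M*x^2 + (1)*M*x^3 + (4)*M^3 + (-6)*M^3*x + (3)*M^3*x^2 + (-3)*M^5 + (3)*M^5*x + (1)*M^7, (1)*x + (2)*M^2 + (-2)*M^2*x + (1)*M^2*x^2 + (-2)*M^4 + (2)*M^4*x + (1)*M^6] := by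
    apply Matrix.inv_eq_right_inv
    show T * S⁻¹ * T * S * T⁻¹ * S * _ = 1
    rw [hD5, Matrix.mul_fin_two, Matrix.one_fin_two]
    apply fin2_ext <;>
      simp only [Matrix.cons_val', Matrix.cons_val_zero, Matrix.cons_val_one, Matrix.head_cons,
        Matrix.head_fin_const, Matrix.empty_val', Matrix.cons_val_fin_one, Matrix.of_apply]
    · linear_combination ((1) + (-2)*x + (4)*x^2 + (-2)*x^3 + (1)*x^4 + (-1)*N^2*x + (1)*N^2*x^2 + (5)*M*N*x + (-8)*M*N*x^2 + (6)*M*N*x^3 + (-2)*M*N*x^4 + (-2)*M*N^3*x + (2)*M*N^3*x^2 + (-1)*M*N^3*x^3 + (-1)*M^2 + (5)*M^2*x + (-6)*M^2*x^2 + (3)*M^2*x^3 + (1)*M^2*N^2*x + (-4)*M^3*N*x + (8)*M^3*N*x^2 + (-4)*M^3*N*x^3 + (2)*M^3*N^3*x + (-2)*M^3*N^3*x^2 + (1)*M^4 + (-4)*M^4*x + (3)*M^4*x^2 + (2)*M^5*N*x + (-2)*M^5*N*x^2 + (-1)*M^5*N^3*x + (1)*M^6*x) * hN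
    · ring
    · ring
    · linear_combination ((1) + (-2)*x + (4)*x^2 + (-2)*x^3 + (1)*x^4 + (-1)*N^2*x + (1)*N^2*x^2 + (5)*M*N*x + (-8)*M*N*x^2 + (6)*M*N*x^3 + (-2)*M*N*x^4 + (-2)*M*N^3*x + (2)*M*N^3*x^2 + (-1)*M*N^3*x^3 + (-1)*M^2 + (5)*M^2*x + (-6)*M^2*x^2 + (3)*M^2*x^3 + (1)*M^2*N^2*x + (-4)*M^3*N*x + (8)*M^3*N*x^2 + (-4)*M^3*N*x^3 + (2)*M^3*N^3*x + (-2)*M^3*N^3*x^2 + (1)*M^4 + (-4)*M^4*x + (3)*M^4*x^2 + (2)*M^5*N*x + (-2)*M^5*N*x^2 + (-1)*M^5*N^3*x + (1)*M^6*x) * hN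
  have hc : c = !![0, -(M*W); y*N, 0] := by
    show (!![0, -M / y; y / M, 0] : Matrix (Fin 2) (Fin 2) ℂ) = _
    rw [div_eq_mul_inv, div_eq_mul_inv, hNM, hWy, neg_mul]
  have hN2 : ((M:ℂ)^2)⁻¹ = N^2 := by rw [← inv_pow, hNM]
  rw [hUinv, hS2, hc]
  rw [Matrix.mul_fin_two, Matrix.mul_fin_two, Matrix.trace_fin_two_of]
  rw [div_eq_mul_inv, div_eq_mul_inv, hN2, hNM]
  apply mul_left_cancel₀ hy0
  linear_combination ((-1)*N*y*W + (-1)*N*y^2 + (-2)*N*x + (3)*N*x*y*W + (1)*N*x^2 + (-2)*N*x^2*y*W + (-1)*N*x^2*y^2 + (-1)*N^3*x*y*W + (-2)*M + (3)*M*y*W + (1)*M*y^2 + (4)*M*x + (-6)*M*x*y*W + (-2)*M*x*y^2 + (-3)*M*x^2 + (3)*M*x^2*y*W + (1)*M*x^3 + (-1)*M*x^3*y*W + (-1)*M*N^2*y^2 + (-2)*M*N^2*x + (1)*M*N^2*x*y^2 + (1)*M*N^2*x^2 + (-1)*M*N^2*x^2*y^2 + (1)*M^2*N*x + (-1)*M^2*N*x*y^2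 + (1)*M^3 + (-4)*M^3*y*W + (-1)*M^3*y^2 + (-1)*M^3*x + (6)*M^3*x*y*W + (1)*M^3*x^2 + (-3)*M^3*x^2*y*W + (1)*M^3*N^2*x + (-1)*M^3*N^2*x*y^2 + (3)*M^5*y*W + (-3)*M^5*x*y*W + (-1)*M^7*y*W) * hN + ((-1)*N + (3)*N*x + (-2)*N*x^2 + (-1)*N^3*x + (3)*M + (-6)*M*x + (3)*M*x^2 + (-1)*M*x^3 + (-4)*M^3 + (6)*M^3*x + (-3)*M^3*x^2 + (3)*M^5 + (-3)*M^5*x + (-1)*M^7) * hW + ((-1)*N + (1)*N*x + (-1)*N*x^2 + (-1)*N^3*x + (1)*M + (-2)*M*x + (-1)*M^3) * hy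
end

section
/- With S = [[M,1],[0,M⁻¹]], T = [[M,0],[2-M²-M⁻²-x, M⁻¹]], U = T·S⁻¹·T·S·T⁻¹·S, c as before, and y ≠ 0 a square root of -1+2M²-M⁴-M²x: for every integer n ≥ 1, tr(S·Uⁿ·c) = (P_{2n}/M^{4n})·(y/M), where P_{2n} is defined recursively by P₀ = 1, P₂ = -M⁴x³ + (-2M⁶+M⁴-2M²)x² + (-M⁸+M⁶-2M⁴+M²-1)x + M⁴, and P_{2n} = Q·P_{2(n-1)} - M⁸·P_{2(n-2)}, with Q = -M⁴x³ + (-2M⁶+2M⁴-2M²)x² + (-M⁸+2M⁶-3M⁴+2M²-1)x + 2M⁴. -/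
set_option maxHeartbeats 2000000

/-- `P_{2n}` as complex values: `P 0 = 1`, `P 1 = P₂`, `P (n+2) = Q·P (n+1) - M⁸·P n`. -/
noncomputable def Pval (M x : ℂ) : ℕ → ℂ
  | 0 => 1
  | 1 => -M ^ 4 * x ^ 3 + (-2 * M ^ 6 + M ^ 4 - 2 * M ^ 2) * x ^ 2 +
      (-M ^ 8 + M ^ 6 - 2 * M ^ 4 + M ^ 2 - 1) * x + M ^ 4
  | n + 2 =>
      (-M ^ 4 * x ^ 3 + (-2 * M ^ 6 + 2 * M ^ 4 - 2 * M ^ 2) * x ^ 2 +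
        (-M ^ 8 + 2 * M ^ 6 - 3 * M ^ 4 + 2 * M ^ 2 - 1) * x + 2 * M ^ 4) * Pval M x (n + 1)
      - M ^ 8 * Pval M x n

/-- For `n ≥ 1`, `tr(S·Uⁿ·c) = (P_{2n}/M^{4n})·(y/M)`. -/
theorem trace_SUnc (M x y : ℂ) (hM : M ≠ 0) (hy0 : y ≠ 0)
    (hy : y ^ 2 = -1 + 2 * M ^ 2 - M ^ 4 - M ^ 2 * x) (n : ℕ) (hn : 1 ≤ n) :
    let S : Matrix (Fin 2) (Fin 2) ℂ := !![M, 1; 0, M⁻¹]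
    let T : Matrix (Fin 2) (Fin 2) ℂ := !![M, 0; 2 - M ^ 2 - M ^ (-2 : ℤ) - x, M⁻¹]
    let U := T * S⁻¹ * T * S * T⁻¹ * S
    let c : Matrix (Fin 2) (Fin 2) ℂ := !![0, -M / y; y / M, 0]
    Matrix.trace (S * U ^ n * c) = (Pval M x n / M ^ (4 * n)) * (y / M) := by
  intro S T U c
  obtain ⟨N, hN⟩ : ∃ N : ℂ, M * N = 1 := ⟨M⁻¹, mul_inv_cancel₀ hM⟩
  have hNi : M⁻¹ = N := inv_eq_of_mul_eq_one_right hN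
  have hE : (-1 + 2 * M ^ 2 - M ^ 4 - M ^ 2 * x) ≠ 0 := by rw [← hy]; exact pow_ne_zero 2 hy0
  obtain ⟨F, hF⟩ : ∃ F : ℂ, (-1 + 2 * M ^ 2 - M ^ 4 - M ^ 2 * x) * F = 1 :=
    ⟨_, mul_inv_cancel₀ hE⟩
  have hz : M ^ (-2 : ℤ) = N ^ 2 := by
    have h2 : M ^ 2 * N ^ 2 = 1 := by linear_combination (M * N + 1) * hN
    rw [zpow_neg]
    norm_cast
    exact inv_eq_of_mul_eq_one_right h2
  have hS : S = !![M, 1; 0, N] := by show !![M, 1; 0, M⁻¹] = _; rw [hNi]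
  have hT : T = !![M, 0; 2 - M ^ 2 - N ^ 2 - x, N] := by
    show !![M, 0; 2 - M ^ 2 - M ^ (-2 : ℤ) - x, M⁻¹] = _; rw [hNi, hz]
  have hSi : S⁻¹ = !![N, -1; 0, M] := by
    apply Matrix.inv_eq_right_inv
    rw [hS]
    ext i j
    fin_cases i <;> fin_cases j
    all_goals simp [Matrix.mul_apply, Fin.sum_univ_two, Matrix.one_apply]
    all_goals (first | ring1 | linear_combination hN)
  have hTi : T⁻¹ = !![N, 0; -(2 - M ^ 2 - N ^ 2 - x), M] := by
    apply Matrix.inv_eq_right_inv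
    rw [hT]
    ext i j
    fin_cases i <;> fin_cases j
    all_goals simp [Matrix.mul_apply, Fin.sum_univ_two, Matrix.one_apply]
    all_goals (first | ring1 | linear_combination hN)
  have hU : U = !![((4)*M^2 + (-4)*M^2*x + (1)*M^2*x^2 + (-2)*M^2*N^2 + (1)*M^2*N^2*x + (-4)*M^3*N + (2)*M^3*N*x + (2)*M^3*N^3 + (-4)*M^4 + (2)*M^4*x + (2)*M^4*N^2 + (2)*M^5*N + (1)*M^6), ((4)*M + (-4)*M*x + (1)*M*x^2 + (-2)*M*N^2 + (1)*M*N^2*x + (-6)*M^2*N + (3)*M^2*N*x + (2)*M^2*N^3 + (-4)*M^3 + (2)*M^3*x + (3)*M^3*N^2 + (3)*M^4*N + (1)*M^5);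
      ((8)*M + (-12)*M*x + (6)*M*x^2 + (-1)*M*x^3 + (-8)*M*N^2 + (8)*M*N^2*x + (-2)*M*N^2*x^2 + (2)*M*N^4 + (-1)*M*N^4*x + (-12)*M^2*N + (12)*M^2*N*x + (-3)*M^2*N*x^2 + (10)*M^2*N^3 + (-5)*M^2*N^3*x + (-2)*M^2*N^5 + (-12)*M^3 + (12)*M^3*x + (-3)*M^3*x^2 + (12)*M^3*N^2 + (-6)*M^3*N^2*x + (-3)*M^3*N^4 + (12)*M^4*N + (-6)*M^4*N*x + (-5)*M^4*N^3 + (6)*M^5 + (-3)*M^5*x + (-4)*M^5*N^2 + (-3)*M^6*N + (-1)*M^7), ((8) + (-12)*x + (6)*x^2 + (-1)*x^3 + (-8)*N^2 + (8)*N^2*x + (-2)*N^2*x^2 + (2)*N^4 + (-1)*N^4*x + (-16)*M*N + (16)*M*N*x + (-4)*M*N*x^2 + (12)*M*N^3 + (-6)*M*N^3*x + (-2)*M*N^5 + (-12)*M^2 + (12)*M^2*x + (-3)*M^2*x^2 + (16)*M^2*N^2 + (-8)*M^2*N^2*x + (-4)*M^2*N^4 + (16)*M^3*N + (-8)*M^3*N*x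 + (-6)*M^3*N^3 + (6)*M^4 + (-3)*M^4*x + (-6)*M^4*N^2 + (-4)*M^5*N + (-1)*M^6)] := by
    show T * S⁻¹ * T * S * T⁻¹ * S = _
    rw [hSi, hTi, hS, hT]
    simp only [Matrix.mul_fin_two]
    ext i j
    fin_cases i <;> fin_cases j
    all_goals simp
    all_goals ring
  have hCH : U * U = ((-M ^ 4 * x ^ 3 + (-2 * M ^ 6 + 2 * M ^ 4 - 2 * M ^ 2) * x ^ 2 + (-M ^ 8 + 2 * M ^ 6 - 3 * M ^ 4 + 2 * M ^ 2 - 1) * x + 2 * M ^ 4) * N ^ 4) • U - 1 := by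
    rw [hU]
    simp only [Matrix.mul_fin_two]
    ext i j
    fin_cases i <;> fin_cases j
    all_goals simp [Matrix.smul_apply, Matrix.sub_apply, Matrix.one_apply, smul_eq_mul]
    · linear_combination ((-1) + (-1)*M*N + (-32)*M^2 + (80)*M^2*x + (-80)*M^2*x^2 + (40)*M^2*x^3 + (-10)*M^2*x^4 + (1)*M^2*x^5 + (47)*M^2*N^2 + (-96)*M^2*N^2*x + (72)*M^2*N^2*x^2 + (-24)*M^2*N^2*x^3 + (3)*M^2*N^2*x^4 + (-24)*M^2*N^4 + (32)*M^2*N^4*x + (-14)*M^2*N^4*x^2 + (2)*M^2*N^4*x^3 + (4)*M^2*N^6 + (-2)*M^2*N^6*x + (64)*M^3*N + (-112)*M^3*N*x + (64)*M^3*N*x^2 + (-8)*M^3*N*x^3 + (-4)*M^3*N*x^4 + (1)*M^3*N*x^5 + (-81)*M^3*N^3 + (96)*M^3*N^3*x + (-24)*M^3*N^3*x^2 + (-8)*M^3*N^3*x^3 + (3)*M^3*N^3*x^4 + (32)*M^3*N^5 + (-20)*M^3*N^5*x + (-2)*M^3*N^5*x^2 + (2)*M^3*N^5*x^3 + (-4)*M^3*N^7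 + (64)*M^4 + (-128)*M^4*x + (96)*M^4*x^2 + (-32)*M^4*x^3 + (4)*M^4*x^4 + (-120)*M^4*N^2 + (164)*M^4*N^2*x + (-74)*M^4*N^2*x^2 + (15)*M^4*N^2*x^3 + (-4)*M^4*N^2*x^4 + (1)*M^4*N^2*x^5 + (67)*M^4*N^4 + (-40)*M^4*N^4*x + (-5)*M^4*N^4*x^2 + (2)*M^4*N^4*x^3 + (1)*M^4*N^4*x^4 + (-12)*M^4*N^6 + (-4)*M^4*N^6*x + (4)*M^4*N^6*x^2 + (-96)*M^5*N + (112)*M^5*N*x + (-24)*M^5*N*x^2 + (-12)*M^5*N*x^3 + (4)*M^5*N*x^4 + (88)*M^5*N^3 + (-44)*M^5*N^3*x + (-22)*M^5*N^3*x^2 + (15)*M^5*N^3*x^3 + (-4)*M^5*N^3*x^4 + (1)*M^5*N^3*x^5 + (-21)*M^5*N^5 + (-6)*M^5*N^5*x + (7)*M^5*N^5*x^2 + (-2)*M^5*N^5*x^3 + (1)*M^5*N^5*x^4 + (-48)*M^6 + (72)*M^6*x + (-36)*M^6*x^2 + (6)*M^6*x^3 + (84)*M^6*N^2 + (-68)*M^6*N^2*x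 + (21)*M^6*N^2*x^2 + (-12)*M^6*N^2*x^3 + (4)*M^6*N^2*x^4 + (-22)*M^6*N^4 + (-14)*M^6*N^4*x + (12)*M^6*N^4*x^2 + (-4)*M^6*N^4*x^3 + (2)*M^6*N^4*x^4 + (-4)*M^6*N^6 + (6)*M^6*N^6*x + (-4)*M^6*N^6*x^2 + (2)*M^6*N^6*x^3 + (48)*M^7*N + (-24)*M^7*N*x + (-12)*M^7*N*x^2 + (6)*M^7*N*x^3 + (-20)*M^7*N^3 + (-16)*M^7*N^3*x + (21)*M^7*N^3*x^2 + (-12)*M^7*N^3*x^3 + (4)*M^7*N^3*x^4 + (-4)*M^7*N^5 + (6)*M^7*N^5*x + (-6)*M^7*N^5*x^2 + (4)*M^7*N^5*x^3 + (16)*M^8 + (-16)*M^8*x + (4)*M^8*x^2 + (-18)*M^8*N^2 + (9)*M^8*N^2*x + (-12)*M^8*N^2*x^2 + (6)*M^8*N^2*x^3 + (-4)*M^8*N^4 + (10)*M^8*N^4*x + (-11)*M^8*N^4*x^2 + (6)*M^8*N^4*x^3 + (-4)*M^8*N^6*x + (4)*M^8*N^6*x^2 + (-8)*M^9*N + (-4)*M^9*N*x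 + (4)*M^9*N*x^2 + (-2)*M^9*N^3 + (9)*M^9*N^3*x + (-12)*M^9*N^3*x^2 + (6)*M^9*N^3*x^3 + (-4)*M^9*N^5*x + (5)*M^9*N^5*x^2 + (-2)*M^10 + (1)*M^10*x + (-4)*M^10*N^2*x + (4)*M^10*N^2*x^2 + (-6)*M^10*N^4*x + (6)*M^10*N^4*x^2 + (2)*M^10*N^6*x + (1)*M^11*N*x + (-4)*M^11*N^3*x + (4)*M^11*N^3*x^2 + (2)*M^11*N^5*x + (1)*M^12*N^2*x + (2)*M^12*N^4*x + (1)*M^13*N^3*x) * hN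
    · linear_combination ((-32)*M + (80)*M*x + (-80)*M*x^2 + (40)*M*x^3 + (-10)*M*x^4 + (1)*M*x^5 + (48)*M*N^2 + (-96)*M*N^2*x + (72)*M*N^2*x^2 + (-24)*M*N^2*x^3 + (3)*M*N^2*x^4 + (-24)*M*N^4 + (32)*M*N^4*x + (-14)*M*N^4*x^2 + (2)*M*N^4*x^3 + (4)*M*N^6 + (-2)*M*N^6*x + (80)*M^2*N + (-144)*M^2*N*x + (88)*M^2*N*x^2 + (-16)*M^2*N*x^3 + (-3)*M^2*N*x^4 + (1)*M^2*N*x^5 + (-96)*M^2*N^3 + (120)*M^2*N^3*x + (-36)*M^2*N^3*x^2 + (-6)*M^2*N^3*x^3 + (3)*M^2*N^3*x^4 + (36)*M^2*N^5 + (-22)*M^2*N^5*x + (-2)*M^2*N^5*x^2 + (2)*M^2*N^5*x^3 + (-4)*M^2*N^7 + (64)*M^3 + (-128)*M^3*x + (96)*M^3*x^2 + (-32)*M^3*x^3 + (4)*M^3*x^4 + (-144)*M^3*N^2 + (192)*M^3*N^2*x + (-80)*M^3*N^2*x^2 + (12)*M^3*N^2*x^3 + (-3)*M^3*N^2*x^4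 + (1)*M^3*N^2*x^5 + (84)*M^3*N^4 + (-48)*M^3*N^4*x + (-9)*M^3*N^4*x^2 + (4)*M^3*N^4*x^3 + (1)*M^3*N^4*x^4 + (-14)*M^3*N^6 + (-4)*M^3*N^6*x + (4)*M^3*N^6*x^2 + (-120)*M^4*N + (148)*M^4*N*x + (-42)*M^4*N*x^2 + (-9)*M^4*N*x^3 + (4)*M^4*N*x^4 + (116)*M^4*N^3 + (-68)*M^4*N^3*x + (-15)*M^4*N^3*x^2 + (12)*M^4*N^3*x^3 + (-3)*M^4*N^3*x^4 + (1)*M^4*N^3*x^5 + (-26)*M^4*N^5 + (-8)*M^4*N^5*x + (9)*M^4*N^5*x^2 + (-2)*M^4*N^5*x^3 + (1)*M^4*N^5*x^4 + (-48)*M^5 + (72)*M^5*x + (-36)*M^5*x^2 + (6)*M^5*x^3 + (108)*M^5*N^2 + (-80)*M^5*N^2*x + (15)*M^5*N^2*x^2 + (-9)*M^5*N^2*x^3 + (4)*M^5*N^2*x^4 + (-28)*M^5*N^4 + (-21)*M^5*N^4*x + (19)*M^5*N^4*x^2 + (-7)*M^5*N^4*x^3 + (3)*M^5*N^4*x^4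 + (-4)*M^5*N^6 + (6)*M^5*N^6*x + (-4)*M^5*N^6*x^2 + (2)*M^5*N^6*x^3 + (60)*M^6*N + (-36)*M^6*N*x + (-9)*M^6*N*x^2 + (6)*M^6*N*x^3 + (-30)*M^6*N^3 + (-11)*M^6*N^3*x + (15)*M^6*N^3*x^2 + (-9)*M^6*N^3*x^3 + (4)*M^6*N^3*x^4 + (-6)*M^6*N^5 + (9)*M^6*N^5*x + (-8)*M^6*N^5*x^2 + (5)*M^6*N^5*x^3 + (16)*M^7 + (-16)*M^7*x + (4)*M^7*x^2 + (-24)*M^7*N^2 + (6)*M^7*N^2*x + (-9)*M^7*N^2*x^2 + (6)*M^7*N^2*x^3 + (-6)*M^7*N^4 + (15)*M^7*N^4*x + (-17)*M^7*N^4*x^2 + (9)*M^7*N^4*x^3 + (-4)*M^7*N^6*x + (4)*M^7*N^6*x^2 + (-10)*M^8*N + (-3)*M^8*N*x + (4)*M^8*N*x^2 + (-2)*M^8*N^3 + (6)*M^8*N^3*x + (-9)*M^8*N^3*x^2 + (6)*M^8*N^3*x^3 + (-6)*M^8*N^5*x + (7)*M^8*N^5*x^2 + (-2)*M^9 + (1)*M^9*x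 + (-3)*M^9*N^2*x + (4)*M^9*N^2*x^2 + (-9)*M^9*N^4*x + (9)*M^9*N^4*x^2 + (2)*M^9*N^6*x + (1)*M^10*N*x + (-3)*M^10*N^3*x + (4)*M^10*N^3*x^2 + (3)*M^10*N^5*x + (1)*M^11*N^2*x + (3)*M^11*N^4*x + (1)*M^12*N^3*x) * hN
    · linear_combination ((-64)*M + (192)*M*x + (-240)*M*x^2 + (160)*M*x^3 + (-60)*M*x^4 + (12)*M*x^5 + (-1)*M*x^6 + (128)*M*N^2 + (-320)*M*N^2*x + (320)*M*N^2*x^2 + (-160)*M*N^2*x^3 + (40)*M*N^2*x^4 + (-4)*M*N^2*x^5 + (-96)*M*N^4 + (184)*M*N^4*x + (-132)*M*N^4*x^2 + (42)*M*N^4*x^3 + (-5)*M*N^4*x^4 + (32)*M*N^6 + (-40)*M*N^6*x + (16)*M*N^6*x^2 + (-2)*M*N^6*x^3 + (-4)*M*N^8 + (2)*M*N^8*x + (160)*M^2*N + (-368)*M^2*N*x + (320)*M^2*N*x^2 + (-120)*M^2*N*x^3 + (10)*M^2*N*x^4 + (5)*M^2*N*x^5 + (-1)*M^2*N*x^6 +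 (-272)*M^2*N^3 + (480)*M^2*N^3*x + (-280)*M^2*N^3*x^2 + (40)*M^2*N^3*x^3 + (15)*M^2*N^3*x^4 + (-4)*M^2*N^3*x^5 + (168)*M^2*N^5 + (-200)*M^2*N^5*x + (54)*M^2*N^5*x^2 + (12)*M^2*N^5*x^3 + (-5)*M^2*N^5*x^4 + (-44)*M^2*N^7 + (26)*M^2*N^7*x + (2)*M^2*N^7*x^2 + (-2)*M^2*N^7*x^3 + (4)*M^2*N^9 + (160)*M^3 + (-400)*M^3*x + (400)*M^3*x^2 + (-200)*M^3*x^3 + (50)*M^3*x^4 + (-5)*M^3*x^5 + (-400)*M^3*N^2 + (752)*M^3*N^2*x + (-520)*M^3*N^2*x^2 + (160)*M^3*N^2*x^3 + (-25)*M^3*N^2*x^4 + (5)*M^3*N^2*x^5 + (-1)*M^3*N^2*x^6 + (336)*M^3*N^4 + (-404)*M^3*N^4*x + (124)*M^3*N^4*x^2 + (3)*M^3*N^4*x^3 + (1)*M^3*N^4*x^4 + (-2)*M^3*N^4*x^5 + (-116)*M^3*N^6 + (56)*M^3*N^6*x + (21)*M^3*N^6*x^2 + (-8)*M^3*N^6*x^3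 + (-1)*M^3*N^6*x^4 + (14)*M^3*N^8 + (4)*M^3*N^8*x + (-4)*M^3*N^8*x^2 + (-320)*M^4*N + (560)*M^4*N*x + (-320)*M^4*N*x^2 + (40)*M^4*N*x^3 + (20)*M^4*N*x^4 + (-5)*M^4*N*x^5 + (448)*M^4*N^3 + (-520)*M^4*N^3*x + (116)*M^4*N^3*x^2 + (54)*M^4*N^3*x^3 + (-25)*M^4*N^3*x^4 + (5)*M^4*N^3*x^5 + (-1)*M^4*N^3*x^6 + (-204)*M^4*N^5 + (100)*M^4*N^5*x + (43)*M^4*N^5*x^2 + (-27)*M^4*N^5*x^3 + (7)*M^4*N^5*x^4 + (-2)*M^4*N^5*x^5 + (30)*M^4*N^7 + (8)*M^4*N^7*x + (-9)*M^4*N^7*x^2 + (2)*M^4*N^7*x^3 + (-1)*M^4*N^7*x^4 + (-160)*M^5 + (320)*M^5*x + (-240)*M^5*x^2 + (80)*M^5*x^3 + (-10)*M^5*x^4 + (408)*M^5*N^2 + (-532)*M^5*N^2*x + (226)*M^5*N^2*x^2 + (-51)*M^5*N^2*x^3 + (20)*M^5*N^2*x^4 + (-5)*M^5*N^2*x^5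 + (-248)*M^5*N^4 + (114)*M^5*N^4*x + (53)*M^5*N^4*x^2 + (-28)*M^5*N^4*x^3 + (8)*M^5*N^4*x^4 + (-3)*M^5*N^4*x^5 + (34)*M^5*N^6 + (41)*M^5*N^6*x + (-37)*M^5*N^6*x^2 + (15)*M^5*N^6*x^3 + (-5)*M^5*N^6*x^4 + (4)*M^5*N^8 + (-6)*M^5*N^8*x + (4)*M^5*N^8*x^2 + (-2)*M^5*N^8*x^3 + (240)*M^6*N + (-280)*M^6*N*x + (60)*M^6*N*x^2 + (30)*M^6*N*x^3 + (-10)*M^6*N*x^4 + (-236)*M^6*N^3 + (112)*M^6*N^3*x + (65)*M^6*N^3*x^2 + (-51)*M^6*N^3*x^3 + (20)*M^6*N^3*x^4 + (-5)*M^6*N^3*x^5 + (44)*M^6*N^5 + (43)*M^6*N^5*x + (-49)*M^6*N^5*x^2 + (29)*M^6*N^5*x^3 + (-10)*M^6*N^5*x^4 + (6)*M^6*N^7 + (-9)*M^6*N^7*x + (8)*M^6*N^7*x^2 + (-5)*M^6*N^7*x^3 + (80)*M^7 + (-120)*M^7*x + (60)*M^7*x^2 + (-10)*M^7*x^3 +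 (-172)*M^7*N^2 + (132)*M^7*N^2*x + (-43)*M^7*N^2*x^2 + (30)*M^7*N^2*x^3 + (-10)*M^7*N^2*x^4 + (40)*M^7*N^4 + (51)*M^7*N^4*x + (-59)*M^7*N^4*x^2 + (36)*M^7*N^4*x^3 + (-12)*M^7*N^4*x^4 + (10)*M^7*N^6 + (-29)*M^7*N^6*x + (33)*M^7*N^6*x^2 + (-15)*M^7*N^6*x^3 + (4)*M^7*N^8*x + (-4)*M^7*N^8*x^2 + (-80)*M^8*N + (40)*M^8*N*x + (20)*M^8*N*x^2 + (-10)*M^8*N*x^3 + (36)*M^8*N^3 + (28)*M^8*N^3*x + (-43)*M^8*N^3*x^2 + (30)*M^8*N^3*x^3 + (-10)*M^8*N^3*x^4 + (8)*M^8*N^5 + (-27)*M^8*N^5*x + (37)*M^8*N^5*x^2 + (-18)*M^8*N^5*x^3 + (6)*M^8*N^7*x + (-7)*M^8*N^7*x^2 + (-20)*M^9 + (20)*M^9*x + (-5)*M^9*x^2 + (26)*M^9*N^2 + (-13)*M^9*N^2*x + (20)*M^9*N^2*x^2 + (-10)*M^9*N^2*x^3 + (6)*M^9*N^4 + (-30)*M^9*N^4*x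 + (40)*M^9*N^4*x^2 + (-18)*M^9*N^4*x^3 + (17)*M^9*N^6*x + (-15)*M^9*N^6*x^2 + (-2)*M^9*N^8*x + (10)*M^10*N + (5)*M^10*N*x + (-5)*M^10*N*x^2 + (2)*M^10*N^3 + (-13)*M^10*N^3*x + (20)*M^10*N^3*x^2 + (-10)*M^10*N^3*x^3 + (15)*M^10*N^5*x + (-14)*M^10*N^5*x^2 + (-3)*M^10*N^7*x + (2)*M^11 + (-1)*M^11*x + (5)*M^11*N^2*x + (-5)*M^11*N^2*x^2 + (14)*M^11*N^4*x + (-12)*M^11*N^4*x^2 + (-5)*M^11*N^6*x + (-1)*M^12*N*x + (5)*M^12*N^3*x + (-5)*M^12*N^3*x^2 + (-4)*M^12*N^5*x + (-1)*M^13*N^2*x + (-3)*M^13*N^4*x + (-1)*M^14*N^3*x) * hN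
    · linear_combination ((-65) + (192)*x + (-240)*x^2 + (160)*x^3 + (-60)*x^4 + (12)*x^5 + (-1)*x^6 + (128)*N^2 + (-320)*N^2*x + (320)*N^2*x^2 + (-160)*N^2*x^3 + (40)*N^2*x^4 + (-4)*N^2*x^5 + (-96)*N^4 + (184)*N^4*x + (-132)*N^4*x^2 + (42)*N^4*x^3 + (-5)*N^4*x^4 + (32)*N^6 + (-40)*N^6*x + (16)*N^6*x^2 + (-2)*N^6*x^3 + (-4)*N^8 + (2)*N^8*x + (191)*M*N + (-448)*M*N*x + (400)*M*N*x^2 + (-160)*M*N*x^3 + (20)*M*N*x^4 + (4)*M*N*x^5 + (-1)*M*N*x^6 + (-320)*M*N^3 + (576)*M*N^3*x + (-352)*M*N^3*x^2 + (64)*M*N^3*x^3 + (12)*M*N^3*x^4 + (-4)*M*N^3*x^5 + (192)*M*N^5 + (-232)*M*N^5*x + (68)*M*N^5*x^2 + (10)*M*N^5*x^3 + (-5)*M*N^5*x^4 + (-48)*M*N^7 + (28)*M*N^7*x + (2)*M*N^7*x^2 + (-2)*M*N^7*x^3 + (4)*M*N^9 + (160)*M^2 + (-400)*M^2*x + (400)*M^2*x^2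 + (-200)*M^2*x^3 + (50)*M^2*x^4 + (-5)*M^2*x^5 + (-465)*M^2*N^2 + (864)*M^2*N^2*x + (-584)*M^2*N^2*x^2 + (168)*M^2*N^2*x^3 + (-21)*M^2*N^2*x^4 + (4)*M^2*N^2*x^5 + (-1)*M^2*N^2*x^6 + (408)*M^2*N^4 + (-488)*M^2*N^4*x + (142)*M^2*N^4*x^2 + (12)*M^2*N^4*x^3 + (-2)*M^2*N^4*x^4 + (-2)*M^2*N^4*x^5 + (-140)*M^2*N^6 + (68)*M^2*N^6*x + (25)*M^2*N^6*x^2 + (-10)*M^2*N^6*x^3 + (-1)*M^2*N^6*x^4 + (16)*M^2*N^8 + (4)*M^2*N^8*x + (-4)*M^2*N^8*x^2 + (-384)*M^3*N + (688)*M^3*N*x + (-416)*M^3*N*x^2 + (72)*M^3*N*x^3 + (16)*M^3*N*x^4 + (-5)*M^3*N*x^5 + (559)*M^3*N^3 + (-672)*M^3*N^3*x + (184)*M^3*N^3*x^2 + (40)*M^3*N^3*x^3 + (-21)*M^3*N^3*x^4 + (4)*M^3*N^3*x^5 + (-1)*M^3*N^3*x^6 + (-256)*M^3*N^5 + (128)*M^3*N^5*x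 + (48)*M^3*N^5*x^2 + (-28)*M^3*N^5*x^3 + (6)*M^3*N^5*x^4 + (-2)*M^3*N^5*x^5 + (36)*M^3*N^7 + (10)*M^3*N^7*x + (-11)*M^3*N^7*x^2 + (2)*M^3*N^7*x^3 + (-1)*M^3*N^7*x^4 + (-160)*M^4 + (320)*M^4*x + (-240)*M^4*x^2 + (80)*M^4*x^3 + (-10)*M^4*x^4 + (504)*M^4*N^2 + (-644)*M^4*N^2*x + (250)*M^4*N^2*x^2 + (-39)*M^4*N^2*x^3 + (16)*M^4*N^2*x^4 + (-5)*M^4*N^2*x^5 + (-321)*M^4*N^4 + (146)*M^4*N^4*x + (75)*M^4*N^4*x^2 + (-42)*M^4*N^4*x^3 + (12)*M^4*N^4*x^4 + (-4)*M^4*N^4*x^5 + (44)*M^4*N^6 + (48)*M^4*N^6*x + (-44)*M^4*N^6*x^2 + (18)*M^4*N^6*x^3 + (-6)*M^4*N^6*x^4 + (4)*M^4*N^8 + (-6)*M^4*N^8*x + (4)*M^4*N^8*x^2 + (-2)*M^4*N^8*x^3 + (288)*M^5*N + (-352)*M^5*N*x + (96)*M^5*N*x^2 + (24)*M^5*N*x^3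 + (-10)*M^5*N*x^4 + (-312)*M^5*N^3 + (172)*M^5*N^3*x + (46)*M^5*N^3*x^2 + (-39)*M^5*N^3*x^3 + (16)*M^5*N^3*x^4 + (-5)*M^5*N^3*x^5 + (55)*M^5*N^5 + (58)*M^5*N^5*x + (-61)*M^5*N^5*x^2 + (34)*M^5*N^5*x^3 + (-12)*M^5*N^5*x^4 + (8)*M^5*N^7 + (-12)*M^5*N^7*x + (10)*M^5*N^7*x^2 + (-6)*M^5*N^7*x^3 + (80)*M^6 + (-120)*M^6*x + (60)*M^6*x^2 + (-10)*M^6*x^3 + (-220)*M^6*N^2 + (156)*M^6*N^2*x + (-31)*M^6*N^2*x^2 + (24)*M^6*N^2*x^3 + (-10)*M^6*N^2*x^4 + (54)*M^6*N^4 + (66)*M^6*N^4*x + (-78)*M^6*N^4*x^2 + (48)*M^6*N^4*x^3 + (-16)*M^6*N^4*x^4 + (12)*M^6*N^6 + (-34)*M^6*N^6*x + (39)*M^6*N^6*x^2 + (-18)*M^6*N^6*x^3 + (4)*M^6*N^8*x + (-4)*M^6*N^8*x^2 + (-96)*M^7*N + (56)*M^7*N*x + (16)*M^7*N*x^2 +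 (-10)*M^7*N*x^3 + (52)*M^7*N^3 + (20)*M^7*N^3*x + (-31)*M^7*N^3*x^2 + (24)*M^7*N^3*x^3 + (-10)*M^7*N^3*x^4 + (12)*M^7*N^5 + (-38)*M^7*N^5*x + (50)*M^7*N^5*x^2 + (-24)*M^7*N^5*x^3 + (8)*M^7*N^7*x + (-9)*M^7*N^7*x^2 + (-20)*M^8 + (20)*M^8*x + (-5)*M^8*x^2 + (34)*M^8*N^2 + (-9)*M^8*N^2*x + (16)*M^8*N^2*x^2 + (-10)*M^8*N^2*x^3 + (8)*M^8*N^4 + (-38)*M^8*N^4*x + (52)*M^8*N^4*x^2 + (-24)*M^8*N^4*x^3 + (20)*M^8*N^6*x + (-18)*M^8*N^6*x^2 + (-2)*M^8*N^8*x + (12)*M^9*N + (4)*M^9*N*x + (-5)*M^9*N*x^2 + (2)*M^9*N^3 + (-9)*M^9*N^3*x + (16)*M^9*N^3*x^2 + (-10)*M^9*N^3*x^3 + (22)*M^9*N^5*x + (-20)*M^9*N^5*x^2 + (-4)*M^9*N^7*x + (2)*M^10 + (-1)*M^10*x + (4)*M^10*N^2*x + (-5)*M^10*N^2*x^2 + (18)*M^10*N^4*x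 + (-16)*M^10*N^4*x^2 + (-6)*M^10*N^6*x + (-1)*M^11*N*x + (4)*M^11*N^3*x + (-5)*M^11*N^3*x^2 + (-6)*M^11*N^5*x + (-1)*M^12*N^2*x + (-4)*M^12*N^4*x + (-1)*M^13*N^3*x) * hN
  have key : ∀ k : ℕ,
      Matrix.trace (S * U ^ (k + 1) * !![0, -(M * F); N, 0]) =
        Pval M x (k + 1) * N ^ (4 * (k + 1)) * N := by
    intro k
    induction k using Nat.twoStepInduction with
    | zero =>
      rw [pow_one, hS, hU]
      simp only [Matrix.mul_fin_two, Matrix.trace_fin_two_of]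
      show _ = Pval M x 1 * N ^ (4 * 1) * N
      rw [show Pval M x 1 = -M ^ 4 * x ^ 3 + (-2 * M ^ 6 + M ^ 4 - 2 * M ^ 2) * x ^ 2 +
        (-M ^ 8 + M ^ 6 - 2 * M ^ 4 + M ^ 2 - 1) * x + M ^ 4 from rfl]
      linear_combination ((8)*N*F + (-12)*N*x*F + (6)*N*x^2*F + (-1)*N*x^3*F + (-8)*N^3*F + (8)*N^3*x*F + (-2)*N^3*x^2*F + (2)*N^5*F + (-8)*M*N^2*F + (4)*M*N^2*x*F + (2)*M*N^2*x^2*F + (-1)*M*N^2*x^3*F + (4)*M*N^4*F + (2)*M*N^4*x*F + (-2)*M*N^4*x^2*F + (-16)*M^2*N*F + (28)*M^2*N*x*F + (-20)*M^2*N*x^2*F + (7)*M^2*N*x^3*F + (-1)*M^2*N*x^4*F + (14)*M^2*N^3*F + (-19)*M^2*N^3*x*F + (12)*M^2*N^3*x^2*F + (-3)*M^2*N^3*x^3*F + (-2)*M^2*N^5*F + (2)*M^2*N^5*x*F + (14)*M^3*N^2*F + (-13)*M^3*N^2*x*F + (1)*M^3*N^2*x^2*F + (3)*M^3*N^2*x^3*F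 + (-1)*M^3*N^2*x^4*F + (-4)*M^3*N^4*F + (6)*M^3*N^4*x^2*F + (-3)*M^3*N^4*x^3*F + (14)*M^4*N*F + (-25)*M^4*N*x*F + (15)*M^4*N*x^2*F + (-3)*M^4*N*x^3*F + (-13)*M^4*N^3*F + (17)*M^4*N^3*x*F + (-8)*M^4*N^3*x^2*F + (3)*M^4*N^3*x^3*F + (-1)*M^4*N^3*x^4*F + (2)*M^4*N^5*F + (-11)*M^5*N^2*F + (5)*M^5*N^2*x*F + (6)*M^5*N^2*x^2*F + (-3)*M^5*N^2*x^3*F + (2)*M^5*N^4*F + (7)*M^5*N^4*x*F + (-8)*M^5*N^4*x^2*F + (3)*M^5*N^4*x^3*F + (-1)*M^5*N^4*x^4*F + (-6)*M^6*N*F + (9)*M^6*N*x*F + (-3)*M^6*N*x^2*F + (5)*M^6*N^3*F + (-5)*M^6*N^3*x*F + (6)*M^6*N^3*x^2*F + (-3)*M^6*N^3*x^3*F + (3)*M^7*N^2*F + (3)*M^7*N^2*x*F + (-3)*M^7*N^2*x^2*F + (1)*M^7*N^4*F + (-5)*M^7*N^4*x*F + (6)*M^7*N^4*x^2*F + (-3)*M^7*N^4*x^3*F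 + (1)*M^8*N*F + (-1)*M^8*N*x*F + (3)*M^8*N^3*x*F + (-3)*M^8*N^3*x^2*F + (-1)*M^9*N^2*x*F + (3)*M^9*N^4*x*F + (-3)*M^9*N^4*x^2*F + (-1)*M^10*N^3*x*F + (-1)*M^11*N^4*x*F) * hN + ((-8)*N + (12)*N*x + (-6)*N*x^2 + (1)*N*x^3 + (8)*N^3 + (-8)*N^3*x + (2)*N^3*x^2 + (-2)*N^5 + (16)*M*N^2 + (-16)*M*N^2*x + (4)*M*N^2*x^2 + (-12)*M*N^4 + (6)*M*N^4*x + (2)*M*N^6 + (8)*M^2*N + (-8)*M^2*N*x + (2)*M^2*N*x^2 + (-14)*M^2*N^3 + (7)*M^2*N^3*x + (4)*M^2*N^5 + (1)*M^2*N^5*x + (-2)*M^2*N^5*x^2 + (-10)*M^3*N^2 + (5)*M^3*N^2*x + (4)*M^3*N^4 + (-2)*M^4*N + (1)*M^4*N*x + (3)*M^4*N^3 + (1)*M^4*N^5 + (-2)*M^4*N^5*x + (1)*M^4*N^5*x^2 + (-1)*M^4*N^5*x^3 + (1)*M^5*N^2 + (1)*M^6*N^5*x + (-2)*M^6*N^5*x^2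 + (-1)*M^8*N^5*x) * hF
    | one =>
      rw [pow_two, hS, hU]
      simp only [Matrix.mul_fin_two, Matrix.trace_fin_two_of]
      show _ = Pval M x 2 * N ^ (4 * 2) * N
      rw [show Pval M x 2 = (-M ^ 4 * x ^ 3 + (-2 * M ^ 6 + 2 * M ^ 4 - 2 * M ^ 2) * x ^ 2 + (-M ^ 8 + 2 * M ^ 6 - 3 * M ^ 4 + 2 * M ^ 2 - 1) * x + 2 * M ^ 4) * Pval M x 1 - M ^ 8 * Pval M x 0 from rfl,
        show Pval M x 1 = -M ^ 4 * x ^ 3 + (-2 * M ^ 6 + M ^ 4 - 2 * M ^ 2) * x ^ 2 +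
        (-M ^ 8 + M ^ 6 - 2 * M ^ 4 + M ^ 2 - 1) * x + M ^ 4 from rfl,
        show Pval M x 0 = 1 from rfl]
      linear_combination ((64)*N*F + (-192)*N*x*F + (240)*N*x^2*F + (-160)*N*x^3*F + (60)*N*x^4*F + (-12)*N*x^5*F + (1)*N*x^6*F + (-128)*N^3*F + (320)*N^3*x*F + (-320)*N^3*x^2*F + (160)*N^3*x^3*F + (-40)*N^3*x^4*F + (4)*N^3*x^5*F + (96)*N^5*F + (-192)*N^5*x*F + (144)*N^5*x^2*F + (-48)*N^5*x^3*F + (6)*N^5*x^4*F + (-32)*N^7*F + (48)*N^7*x*F + (-24)*N^7*x^2*F + (4)*N^7*x^3*F + (4)*N^9*F + (-4)*N^9*x*F + (-192)*M*N^2*F + (448)*M*N^2*x*F + (-400)*M*N^2*x^2*F + (160)*M*N^2*x^3*F + (-20)*M*N^2*x^4*F + (-4)*M*N^2*x^5*F + (1)*M*N^2*x^6*F + (320)*M*N^4*F + (-576)*M*N^4*x*F + (352)*M*N^4*x^2*F + (-64)*M*N^4*x^3*F + (-12)*M*N^4*x^4*F + (4)*M*N^4*x^5*F + (-192)*M*N^6*F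 + (240)*M*N^6*x*F + (-72)*M*N^6*x^2*F + (-12)*M*N^6*x^3*F + (6)*M*N^6*x^4*F + (48)*M*N^8*F + (-32)*M*N^8*x*F + (-4)*M*N^8*x^2*F + (4)*M*N^8*x^3*F + (-4)*M*N^10*F + (-192)*M^2*N*F + (576)*M^2*N*x*F + (-752)*M^2*N*x^2*F + (560)*M^2*N*x^3*F + (-260)*M^2*N*x^4*F + (76)*M^2*N*x^5*F + (-13)*M^2*N*x^6*F + (1)*M^2*N*x^7*F + (544)*M^2*N^3*F + (-1216)*M^2*N^3*x*F + (1152)*M^2*N^3*x^2*F + (-624)*M^2*N^3*x^3*F + (218)*M^2*N^3*x^4*F + (-48)*M^2*N^3*x^5*F + (5)*M^2*N^3*x^6*F + (-480)*M^2*N^5*F + (768)*M^2*N^5*x*F + (-512)*M^2*N^5*x^2*F + (216)*M^2*N^5*x^3*F + (-66)*M^2*N^5*x^4*F + (10)*M^2*N^5*x^5*F + (168)*M^2*N^7*F + (-168)*M^2*N^7*x*F + (82)*M^2*N^7*x^2*F + (-40)*M^2*N^7*x^3*F + (10)*M^2*N^7*x^4*F + (-20)*M^2*N^9*F + (8)*M^2*N^9*x*F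 + (-4)*M^2*N^9*x^2*F + (528)*M^3*N^2*F + (-1264)*M^3*N^2*x*F + (1256)*M^3*N^2*x^2*F + (-656)*M^3*N^2*x^3*F + (177)*M^3*N^2*x^4*F + (-13)*M^3*N^2*x^5*F + (-5)*M^3*N^2*x^6*F + (1)*M^3*N^2*x^7*F + (-832)*M^3*N^4*F + (1544)*M^3*N^4*x*F + (-1148)*M^3*N^4*x^2*F + (406)*M^3*N^4*x^3*F + (-37)*M^3*N^4*x^4*F + (-20)*M^3*N^4*x^5*F + (5)*M^3*N^4*x^6*F + (436)*M^3*N^6*F + (-592)*M^3*N^6*x*F + (305)*M^3*N^6*x^2*F + (-39)*M^3*N^6*x^3*F + (-30)*M^3*N^6*x^4*F + (10)*M^3*N^6*x^5*F + (-84)*M^3*N^8*F + (80)*M^3*N^8*x*F + (-19)*M^3*N^8*x^2*F + (-20)*M^3*N^8*x^3*F + (10)*M^3*N^8*x^4*F + (4)*M^3*N^10*F + (-4)*M^3*N^10*x*F + (256)*M^4*N*F + (-752)*M^4*N*x*F + (944)*M^4*N*x^2*F + (-648)*M^4*N*x^3*F + (256)*M^4*N*x^4*F + (-55)*M^4*N*x^5*F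 + (5)*M^4*N*x^6*F + (-920)*M^4*N^3*F + (1972)*M^4*N^3*x*F + (-1762)*M^4*N^3*x^2*F + (827)*M^4*N^3*x^3*F + (-208)*M^4*N^3*x^4*F + (29)*M^4*N^3*x^5*F + (-5)*M^4*N^3*x^6*F + (1)*M^4*N^3*x^7*F + (780)*M^4*N^5*F + (-1268)*M^4*N^5*x*F + (831)*M^4*N^5*x^2*F + (-270)*M^4*N^5*x^3*F + (57)*M^4*N^5*x^4*F + (-20)*M^4*N^5*x^5*F + (5)*M^4*N^5*x^6*F + (-234)*M^4*N^7*F + (289)*M^4*N^7*x*F + (-140)*M^4*N^7*x^2*F + (47)*M^4*N^7*x^3*F + (-30)*M^4*N^7*x^4*F + (10)*M^4*N^7*x^5*F + (22)*M^4*N^9*F + (-20)*M^4*N^9*x*F + (-648)*M^5*N^2*F + (1484)*M^5*N^2*x*F + (-1334)*M^5*N^2*x^2*F + (545)*M^5*N^2*x^3*F + (-64)*M^5*N^2*x^4*F + (-20)*M^5*N^2*x^5*F + (5)*M^5*N^2*x^6*F + (996)*M^5*N^4*F + (-1728)*M^5*N^4*x*F + (1053)*M^5*N^4*x^2*F + (-171)*M^5*N^4*x^3*F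 + (-70)*M^5*N^4*x^4*F + (29)*M^5*N^4*x^5*F + (-5)*M^5*N^4*x^6*F + (1)*M^5*N^4*x^7*F + (-474)*M^5*N^6*F + (585)*M^5*N^6*x*F + (-156)*M^5*N^6*x^2*F + (-83)*M^5*N^6*x^3*F + (57)*M^5*N^6*x^4*F + (-20)*M^5*N^6*x^5*F + (5)*M^5*N^6*x^6*F + (82)*M^5*N^8*F + (-54)*M^5*N^8*x*F + (-36)*M^5*N^8*x^2*F + (47)*M^5*N^8*x^3*F + (-30)*M^5*N^8*x^4*F + (10)*M^5*N^8*x^5*F + (-4)*M^5*N^10*F + (-192)*M^6*N*F + (528)*M^6*N*x*F + (-584)*M^6*N*x^2*F + (324)*M^6*N*x^3*F + (-90)*M^6*N*x^4*F + (10)*M^6*N*x^5*F + (840)*M^6*N^3*F + (-1576)*M^6*N^3*x*F + (1094)*M^6*N^3*x^2*F + (-332)*M^6*N^3*x^3*F + (57)*M^6*N^3*x^4*F + (-20)*M^6*N^3*x^5*F + (5)*M^6*N^3*x^6*F + (-666)*M^6*N^5*F + (883)*M^6*N^5*x*F + (-371)*M^6*N^5*x^2*F + (96)*M^6*N^5*x^3*F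 + (-70)*M^6*N^5*x^4*F + (29)*M^6*N^5*x^5*F + (-5)*M^6*N^5*x^6*F + (1)*M^6*N^5*x^7*F + (181)*M^6*N^7*F + (-148)*M^6*N^7*x*F + (59)*M^6*N^7*x^2*F + (-83)*M^6*N^7*x^3*F + (57)*M^6*N^7*x^4*F + (-20)*M^6*N^7*x^5*F + (5)*M^6*N^7*x^6*F + (-16)*M^6*N^9*F + (436)*M^7*N^2*F + (-860)*M^7*N^2*x*F + (573)*M^7*N^2*x^2*F + (-106)*M^7*N^2*x^3*F + (-30)*M^7*N^2*x^4*F + (10)*M^7*N^2*x^5*F + (-642)*M^7*N^4*F + (835)*M^7*N^4*x*F + (-239)*M^7*N^4*x^2*F + (-83)*M^7*N^4*x^3*F + (57)*M^7*N^4*x^4*F + (-20)*M^7*N^4*x^5*F + (5)*M^7*N^4*x^6*F + (258)*M^7*N^6*F + (-159)*M^7*N^6*x*F + (-71)*M^7*N^6*x^2*F + (96)*M^7*N^6*x^3*F + (-70)*M^7*N^6*x^4*F + (29)*M^7*N^6*x^5*F + (-5)*M^7*N^6*x^6*F + (1)*M^7*N^6*x^7*F + (-31)*M^7*N^8*F +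 (-18)*M^7*N^8*x*F + (59)*M^7*N^8*x^2*F + (-83)*M^7*N^8*x^3*F + (57)*M^7*N^8*x^4*F + (-20)*M^7*N^8*x^5*F + (5)*M^7*N^8*x^6*F + (84)*M^8*N*F + (-204)*M^8*N*x*F + (181)*M^8*N*x^2*F + (-70)*M^8*N*x^3*F + (10)*M^8*N*x^4*F + (-422)*M^8*N^3*F + (587)*M^8*N^3*x*F + (-242)*M^8*N^3*x^2*F + (47)*M^8*N^3*x^3*F + (-30)*M^8*N^3*x^4*F + (10)*M^8*N^3*x^5*F + (274)*M^8*N^5*F + (-207)*M^8*N^5*x*F + (59)*M^8*N^5*x^2*F + (-83)*M^8*N^5*x^3*F + (57)*M^8*N^5*x^4*F + (-20)*M^8*N^5*x^5*F + (5)*M^8*N^5*x^6*F + (-48)*M^8*N^7*F + (23)*M^8*N^7*x*F + (-71)*M^8*N^7*x^2*F + (96)*M^8*N^7*x^3*F + (-70)*M^8*N^7*x^4*F + (29)*M^8*N^7*x^5*F + (-5)*M^8*N^7*x^6*F + (1)*M^8*N^7*x^7*F + (-162)*M^9*N^2*F + (239)*M^9*N^2*x*F + (-79)*M^9*N^2*x^2*F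 + (-20)*M^9*N^2*x^3*F + (10)*M^9*N^2*x^4*F + (204)*M^9*N^4*F + (-133)*M^9*N^4*x*F + (-36)*M^9*N^4*x^2*F + (47)*M^9*N^4*x^3*F + (-30)*M^9*N^4*x^4*F + (10)*M^9*N^4*x^5*F + (-48)*M^9*N^6*F + (-18)*M^9*N^6*x*F + (59)*M^9*N^6*x^2*F + (-83)*M^9*N^6*x^3*F + (57)*M^9*N^6*x^4*F + (-20)*M^9*N^6*x^5*F + (5)*M^9*N^6*x^6*F + (-2)*M^9*N^8*F + (23)*M^9*N^8*x*F + (-71)*M^9*N^8*x^2*F + (96)*M^9*N^8*x^3*F + (-70)*M^9*N^8*x^4*F + (29)*M^9*N^8*x^5*F + (-5)*M^9*N^8*x^6*F + (1)*M^9*N^8*x^7*F + (-20)*M^10*N*F + (40)*M^10*N*x*F + (-25)*M^10*N*x^2*F + (5)*M^10*N*x^3*F + (106)*M^10*N^3*F + (-80)*M^10*N^3*x*F + (14)*M^10*N^3*x^2*F + (-20)*M^10*N^3*x^3*F + (10)*M^10*N^3*x^4*F + (-40)*M^10*N^5*F + (10)*M^10*N^5*x*F + (-36)*M^10*N^5*x^2*F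 + (47)*M^10*N^5*x^3*F + (-30)*M^10*N^5*x^4*F + (10)*M^10*N^5*x^5*F + (1)*M^10*N^7*F + (-18)*M^10*N^7*x*F + (59)*M^10*N^7*x^2*F + (-83)*M^10*N^7*x^3*F + (57)*M^10*N^7*x^4*F + (-20)*M^10*N^7*x^5*F + (5)*M^10*N^7*x^6*F + (30)*M^11*N^2*F + (-25)*M^11*N^2*x*F + (-5)*M^11*N^2*x^2*F + (5)*M^11*N^2*x^3*F + (-24)*M^11*N^4*F + (-3)*M^11*N^4*x*F + (14)*M^11*N^4*x^2*F + (-20)*M^11*N^4*x^3*F + (10)*M^11*N^4*x^4*F + (10)*M^11*N^6*x*F + (-36)*M^11*N^6*x^2*F + (47)*M^11*N^6*x^3*F + (-30)*M^11*N^6*x^4*F + (10)*M^11*N^6*x^5*F + (1)*M^11*N^8*F + (-18)*M^11*N^8*x*F + (59)*M^11*N^8*x^2*F + (-83)*M^11*N^8*x^3*F + (57)*M^11*N^8*x^4*F + (-20)*M^11*N^8*x^5*F + (5)*M^11*N^8*x^6*F + (2)*M^12*N*F + (-3)*M^12*N*x*F + (1)*M^12*N*x^2*F + (-10)*M^12*N^3*F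 + (-5)*M^12*N^3*x^2*F + (5)*M^12*N^3*x^3*F + (-3)*M^12*N^5*x*F + (14)*M^12*N^5*x^2*F + (-20)*M^12*N^5*x^3*F + (10)*M^12*N^5*x^4*F + (10)*M^12*N^7*x*F + (-36)*M^12*N^7*x^2*F + (47)*M^12*N^7*x^3*F + (-30)*M^12*N^7*x^4*F + (10)*M^12*N^7*x^5*F + (-2)*M^13*N^2*F + (1)*M^13*N^2*x^2*F + (-5)*M^13*N^4*x^2*F + (5)*M^13*N^4*x^3*F + (-3)*M^13*N^6*x*F + (14)*M^13*N^6*x^2*F + (-20)*M^13*N^6*x^3*F + (10)*M^13*N^6*x^4*F + (10)*M^13*N^8*x*F + (-36)*M^13*N^8*x^2*F + (47)*M^13*N^8*x^3*F + (-30)*M^13*N^8*x^4*F + (10)*M^13*N^8*x^5*F + (1)*M^14*N^3*x^2*F + (-5)*M^14*N^5*x^2*F + (5)*M^14*N^5*x^3*F + (-3)*M^14*N^7*x*F + (14)*M^14*N^7*x^2*F + (-20)*M^14*N^7*x^3*F + (10)*M^14*N^7*x^4*F + (1)*M^15*N^4*x^2*F + (-5)*M^15*N^6*x^2*F + (5)*M^15*N^6*x^3*F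 + (-3)*M^15*N^8*x*F + (14)*M^15*N^8*x^2*F + (-20)*M^15*N^8*x^3*F + (10)*M^15*N^8*x^4*F + (1)*M^16*N^5*x^2*F + (-5)*M^16*N^7*x^2*F + (5)*M^16*N^7*x^3*F + (1)*M^17*N^6*x^2*F + (-5)*M^17*N^8*x^2*F + (5)*M^17*N^8*x^3*F + (1)*M^18*N^7*x^2*F + (1)*M^19*N^8*x^2*F) * hN + ((-64)*N + (192)*N*x + (-240)*N*x^2 + (160)*N*x^3 + (-60)*N*x^4 + (12)*N*x^5 + (-1)*N*x^6 + (128)*N^3 + (-320)*N^3*x + (320)*N^3*x^2 + (-160)*N^3*x^3 + (40)*N^3*x^4 + (-4)*N^3*x^5 + (-96)*N^5 + (192)*N^5*x + (-144)*N^5*x^2 + (48)*N^5*x^3 + (-6)*N^5*x^4 + (32)*N^7 + (-48)*N^7*x + (24)*N^7*x^2 + (-4)*N^7*x^3 + (-4)*N^9 + (4)*N^9*x + (256)*M*N^2 + (-640)*M*N^2*x + (640)*M*N^2*x^2 + (-320)*M*N^2*x^3 + (80)*M*N^2*x^4 + (-8)*M*N^2*x^5 + (-448)*M*N^4 + (896)*M*N^4*x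 + (-672)*M*N^4*x^2 + (224)*M*N^4*x^3 + (-28)*M*N^4*x^4 + (288)*M*N^6 + (-432)*M*N^6*x + (216)*M*N^6*x^2 + (-36)*M*N^6*x^3 + (-80)*M*N^8 + (80)*M*N^8*x + (-20)*M*N^8*x^2 + (8)*M*N^10 + (-4)*M*N^10*x + (128)*M^2*N + (-320)*M^2*N*x + (320)*M^2*N*x^2 + (-160)*M^2*N*x^3 + (40)*M^2*N*x^4 + (-4)*M^2*N*x^5 + (-608)*M^2*N^3 + (1216)*M^2*N^3*x + (-912)*M^2*N^3*x^2 + (304)*M^2*N^3*x^3 + (-38)*M^2*N^3*x^4 + (704)*M^2*N^5 + (-1056)*M^2*N^5*x + (528)*M^2*N^5*x^2 + (-88)*M^2*N^5*x^3 + (-328)*M^2*N^7 + (328)*M^2*N^7*x + (-82)*M^2*N^7*x^2 + (64)*M^2*N^9 + (-32)*M^2*N^9*x + (-3)*M^2*N^9*x^2 + (4)*M^2*N^9*x^3 + (-4)*M^2*N^11 + (-432)*M^3*N^2 + (864)*M^3*N^2*x + (-648)*M^3*N^2*x^2 + (216)*M^3*N^2*x^3 + (-27)*M^3*N^2*x^4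 + (880)*M^3*N^4 + (-1320)*M^3*N^4*x + (660)*M^3*N^4*x^2 + (-110)*M^3*N^4*x^3 + (-604)*M^3*N^6 + (604)*M^3*N^6*x + (-151)*M^3*N^6*x^2 + (168)*M^3*N^8 + (-84)*M^3*N^8*x + (-16)*M^3*N^10 + (-96)*M^4*N + (192)*M^4*N*x + (-144)*M^4*N*x^2 + (48)*M^4*N*x^3 + (-6)*M^4*N*x^4 + (664)*M^4*N^3 + (-996)*M^4*N^3*x + (498)*M^4*N^3*x^2 + (-83)*M^4*N^3*x^3 + (-716)*M^4*N^5 + (716)*M^4*N^5*x + (-179)*M^4*N^5*x^2 + (266)*M^4*N^7 + (-133)*M^4*N^7*x + (-32)*M^4*N^9 + (-3)*M^4*N^9*x + (7)*M^4*N^9*x^2 + (-9)*M^4*N^9*x^3 + (6)*M^4*N^9*x^4 + (264)*M^5*N^2 + (-396)*M^5*N^2*x + (198)*M^5*N^2*x^2 + (-33)*M^5*N^2*x^3 + (-556)*M^5*N^4 + (556)*M^5*N^4*x + (-139)*M^5*N^4*x^2 + (298)*M^5*N^6 + (-149)*M^5*N^6*x + (-46)*M^5*N^8 + (32)*M^6*N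 + (-48)*M^6*N*x + (24)*M^6*N*x^2 + (-4)*M^6*N*x^3 + (-280)*M^6*N^3 + (280)*M^6*N^3*x + (-70)*M^6*N^3*x^2 + (238)*M^6*N^5 + (-119)*M^6*N^5*x + (-49)*M^6*N^7 + (4)*M^6*N^9*x + (-16)*M^6*N^9*x^2 + (18)*M^6*N^9*x^3 + (-9)*M^6*N^9*x^4 + (4)*M^6*N^9*x^5 + (-68)*M^7*N^2 + (68)*M^7*N^2*x + (-17)*M^7*N^2*x^2 + (134)*M^7*N^4 + (-67)*M^7*N^4*x + (-40)*M^7*N^6 + (-4)*M^8*N + (4)*M^8*N*x + (-1)*M^8*N*x^2 + (46)*M^8*N^3 + (-23)*M^8*N^3*x + (-24)*M^8*N^5 + (1)*M^8*N^9 + (-7)*M^8*N^9*x + (16)*M^8*N^9*x^2 + (-22)*M^8*N^9*x^3 + (15)*M^8*N^9*x^4 + (-3)*M^8*N^9*x^5 + (1)*M^8*N^9*x^6 + (6)*M^9*N^2 + (-3)*M^9*N^2*x + (-10)*M^9*N^4 + (-2)*M^10*N^3 + (4)*M^10*N^9*x + (-16)*M^10*N^9*x^2 + (18)*M^10*N^9*x^3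 + (-9)*M^10*N^9*x^4 + (4)*M^10*N^9*x^5 + (-3)*M^12*N^9*x + (7)*M^12*N^9*x^2 + (-9)*M^12*N^9*x^3 + (6)*M^12*N^9*x^4 + (-3)*M^14*N^9*x^2 + (4)*M^14*N^9*x^3 + (1)*M^16*N^9*x^2) * hF
    | more k ih1 ih2 =>
      have h8 : M ^ 8 * N ^ 8 = 1 := by
        linear_combination (M^7*N^7 + M^6*N^6 + M^5*N^5 + M^4*N^4 + M^3*N^3 + M^2*N^2 + M*N + 1) * hN
      have hpow : U ^ (k + 2 + 1) = U ^ (k + 1 + 1) * U := by rw [← pow_succ]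
      have hpow2 : U ^ (k + 1 + 1) = U ^ (k + 1) * U := by rw [← pow_succ]
      rw [hpow, hpow2, mul_assoc (U ^ (k+1)) U U, hCH, mul_sub, Matrix.mul_smul, mul_one,
        Matrix.mul_sub, Matrix.sub_mul, Matrix.mul_smul, Matrix.smul_mul,
        Matrix.trace_sub, Matrix.trace_smul,
        show S * (U ^ (k + 1) * U) = S * U ^ (k + 1 + 1) from by rw [← mul_assoc, mul_assoc S, ← pow_succ],
        ih2, ih1, smul_eq_mul,
        show Pval M x (k + 2 + 1) = (-M ^ 4 * x ^ 3 + (-2 * M ^ 6 + 2 * M ^ 4 - 2 * M ^ 2) * x ^ 2 + (-M ^ 8 + 2 * M ^ 6 - 3 * M ^ 4 + 2 * M ^ 2 - 1) * x + 2 * M ^ 4) * Pval M x (k + 1 + 1) - M ^ 8 * Pval M x (k + 1) from rfl,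
        show 4 * (k + 2 + 1) = 4 * (k + 1) + 8 from by ring,
        show 4 * (k + 1 + 1) = 4 * (k + 1) + 4 from by ring,
        pow_add, pow_add]
      linear_combination (Pval M x (k + 1) * N ^ (4 * (k + 1)) * N) * h8
  obtain ⟨k, rfl⟩ : ∃ k, n = k + 1 := ⟨n - 1, (Nat.succ_pred_eq_of_pos hn).symm⟩
  have hc : c = y • !![0, -(M * F); N, 0] := by
    ext i j
    fin_cases i <;> fin_cases j
    all_goals simp [c, smul_eq_mul]
    · rw [div_eq_iff hy0]
      linear_combination (M * F) * hy + M * hF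
    · rw [div_eq_iff hM, ← hNi]
      field_simp
  rw [hc, Matrix.mul_smul, Matrix.trace_smul, key k, smul_eq_mul]
  have hMN : (M : ℂ) ^ (4 * (k + 1)) * N ^ (4 * (k + 1)) = 1 := by
    rw [← mul_pow, hN, one_pow]
  rw [div_eq_mul_inv, inv_eq_of_mul_eq_one_right hMN, div_eq_mul_inv, hNi]
  ring
end

section
/- Let S, T be as above and suppose (as complex matrices) tr(S·Uⁿ·c) = 0, where U = T·S⁻¹·T·S·T⁻¹·S, c² = -I, and c·S = T⁻¹·c. Then S·(Uⁿ)·T⁻¹·(Uⁿ)⁻¹ = I, i.e., the assignment s ↦ S, t ↦ T defines a representation of the group ⟨s, t | s·wⁿ·t⁻¹·wⁿ⁻¹⟩ with w = t·s⁻¹·t·s·t⁻¹·s into SL(2,ℂ). -/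
lemma sq_eq_neg_one_of_trace_zero' (M : Matrix (Fin 2) (Fin 2) ℂ)
    (hdet : M.det = 1) (htr : M.trace = 0) : M * M = -1 := by
  rw [Matrix.det_fin_two] at hdet
  rw [Matrix.trace_fin_two] at htr
  ext i j
  fin_cases i <;> fin_cases j <;>
    simp [Matrix.mul_apply, Fin.sum_univ_two, Matrix.one_apply]
  · linear_combination M 0 0 * htr - hdet
  · linear_combination M 0 1 * htr
  · linear_combination M 1 0 * htr
  · linear_combination M 1 1 * htr - hdet

/-- If `tr(S·Uⁿ·c) = 0` with `c·S = T⁻¹·c` and `c² = -I`, then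
`S·Uⁿ·T⁻¹·(Uⁿ)⁻¹ = I`, i.e. `s ↦ S, t ↦ T` is a representation of the knot group. -/
theorem representation_of_trace_zero (S T c : Matrix.SpecialLinearGroup (Fin 2) ℂ)
    (h1 : c * S = T⁻¹ * c)
    (h2 : ((c ^ 2 : Matrix.SpecialLinearGroup (Fin 2) ℂ) : Matrix (Fin 2) (Fin 2) ℂ) = -1)
    (n : ℤ)
    (htr : Matrix.trace
      ((S * (T * S⁻¹ * T * S * T⁻¹ * S) ^ n * c : Matrix.SpecialLinearGroup (Fin 2) ℂ) :
        Matrix (Fin 2) (Fin 2) ℂ) = 0) :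
    S * (T * S⁻¹ * T * S * T⁻¹ * S) ^ n * T⁻¹ * ((T * S⁻¹ * T * S * T⁻¹ * S) ^ n)⁻¹ = 1 := by
  set U : Matrix.SpecialLinearGroup (Fin 2) ℂ := T * S⁻¹ * T * S * T⁻¹ * S with hUdef
  -- the matrix of c*c is -1
  have hccm : ((c : Matrix (Fin 2) (Fin 2) ℂ)) * ((c : Matrix (Fin 2) (Fin 2) ℂ)) = -1 := by
    have : ((c ^ 2 : Matrix.SpecialLinearGroup (Fin 2) ℂ) : Matrix (Fin 2) (Fin 2) ℂ)
        = ((c : Matrix (Fin 2) (Fin 2) ℂ)) * ((c : Matrix (Fin 2) (Fin 2) ℂ)) := by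
      rw [pow_two]; simp
    rw [← this, h2]
  -- c*c is central
  have hcen : ∀ x : Matrix.SpecialLinearGroup (Fin 2) ℂ, c * c * x = x * (c * c) := by
    intro x
    apply Subtype.ext
    show ((c : Matrix (Fin 2) (Fin 2) ℂ)) * ((c : Matrix (Fin 2) (Fin 2) ℂ)) * (x : Matrix (Fin 2) (Fin 2) ℂ)
        = (x : Matrix (Fin 2) (Fin 2) ℂ) * (((c : Matrix (Fin 2) (Fin 2) ℂ)) * ((c : Matrix (Fin 2) (Fin 2) ℂ)))
    rw [hccm, neg_one_mul, mul_neg_one]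
  have hconjS : c * S * c⁻¹ = T⁻¹ := by rw [h1]; group
  have hS : S = c⁻¹ * (T⁻¹ * c) := by rw [← h1]; group
  have hSinv : c * S⁻¹ * c⁻¹ = T := by rw [hS]; group
  have hconjT : c * T * c⁻¹ = S⁻¹ := by
    calc c * T * c⁻¹ = c * c * S⁻¹ * (c * c)⁻¹ := by rw [← hSinv]; group
      _ = S⁻¹ * (c * c) * (c * c)⁻¹ := by rw [hcen]
      _ = S⁻¹ := by group
  have hUc : c * U * c⁻¹ = U⁻¹ := by
    have expand : c * U * c⁻¹
        = (c * T * c⁻¹) * (c * S * c⁻¹)⁻¹ * (c * T * c⁻¹) * (c * S * c⁻¹) *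
          (c * T * c⁻¹)⁻¹ * (c * S * c⁻¹) := by
      rw [hUdef]; group
    rw [expand, hconjS, hconjT, hUdef]; group
  have hUn : c * U ^ n * c⁻¹ = (U ^ n)⁻¹ := by
    have h := map_zpow (MulAut.conj c) U n
    simp only [MulAut.conj_apply] at h
    rw [h, hUc, inv_zpow]
  have hcomm : c * U ^ n = (U ^ n)⁻¹ * c := by
    rw [← hUn]; group
  -- the trace condition gives `(S·Uⁿ·c)² = c²`
  have hA2 : (S * U ^ n * c) * (S * U ^ n * c) = c * c := by
    apply Subtype.ext
    show ((S * U ^ n * c : Matrix.SpecialLinearGroup (Fin 2) ℂ) : Matrix (Fin 2) (Fin 2) ℂ) *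
        ((S * U ^ n * c : Matrix.SpecialLinearGroup (Fin 2) ℂ) : Matrix (Fin 2) (Fin 2) ℂ)
        = ((c : Matrix (Fin 2) (Fin 2) ℂ)) * ((c : Matrix (Fin 2) (Fin 2) ℂ))
    rw [sq_eq_neg_one_of_trace_zero' _ (by simp) htr, hccm]
  have e1 : (S * U ^ n * c) * (S * U ^ n * c) = S * U ^ n * (c * S) * U ^ n * c := by group
  rw [e1, h1] at hA2
  have e2 : S * U ^ n * (T⁻¹ * c) * U ^ n * c = S * U ^ n * T⁻¹ * (c * U ^ n) * c := by group
  rw [e2, hcomm] at hA2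
  have key : S * U ^ n * T⁻¹ * (U ^ n)⁻¹ * (c * c) = 1 * (c * c) := by
    rw [one_mul]
    calc S * U ^ n * T⁻¹ * (U ^ n)⁻¹ * (c * c)
        = S * U ^ n * T⁻¹ * ((U ^ n)⁻¹ * c) * c := by group
      _ = c * c := hA2
  exact mul_right_cancel key
end
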